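/- arXiv:2303.14036 — 5 statements merged into one kernel-verified Lean document; each statement's English description precedes it below -/
import Mathlib

section
/- The unique real solution y > 0 of the equation 2Ψ(y) = yΨ'(y), where Ψ(y) = αy² - y³/3 for 0 ≤ y < α and Ψ(y) = (2/3)α³ + α²(y-α) + (y-α)³ for y ≥ α, is y = (4/√3)·cos(5π/18)·α. -/
set_option maxHeartbeats 800000


noncomputable def Psi (α y : ℝ) : ℝ :=
  if y < α then α * y ^ 2 - y ^ 3 / 3
  else (2 / 3) * α ^ 3 + α ^ 2 * (y - α) + (y - α) ^ 3

noncomputable def Psi' (α y : ℝ) : ℝ :=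
  if y < α then 2 * α * y - y ^ 2 else α ^ 2 + 3 * (y - α) ^ 2

/-- The unique real solution `y > 0` of `2 Ψ(y) = y Ψ'(y)` is
`(4/√3) cos(5π/18) α`. -/
theorem stmt0 (α : ℝ) (hα : 0 < α) (y : ℝ) (hy : 0 < y) :
    2 * Psi α y = y * Psi' α y ↔
      y = (4 / Real.sqrt 3) * Real.cos (5 * Real.pi / 18) * α := by
  set c : ℝ := 4 / Real.sqrt 3 * Real.cos (5 * Real.pi / 18) with hc
  have hs3 : (0:ℝ) < Real.sqrt 3 := by positivity
  have hs3sq : Real.sqrt 3 ^ 2 = 3 := Real.sq_sqrt (by norm_num)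
  have hpi : (0:ℝ) < Real.pi := Real.pi_pos
  -- cos(5π/18) > 1/2
  have hcosgt : Real.cos (5 * Real.pi / 18) > 1 / 2 := by
    have h1 : Real.cos (Real.pi / 3) < Real.cos (5 * Real.pi / 18) := by
      apply Real.cos_lt_cos_of_nonneg_of_le_pi (by positivity) (by linarith)
      linarith
    rwa [Real.cos_pi_div_three] at h1
  have hcgt : c > 2 / Real.sqrt 3 := by
    have hkey : c - 2 / Real.sqrt 3 = (4 * Real.cos (5 * Real.pi / 18) - 2) / Real.sqrt 3 := by
      rw [hc]; ring
    have : (0:ℝ) < (4 * Real.cos (5 * Real.pi / 18) - 2) / Real.sqrt 3 :=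
      div_pos (by linarith) hs3
    linarith [hkey ▸ this]
  have h0 : (0:ℝ) < 2 / Real.sqrt 3 := by positivity
  have hcpos : (0:ℝ) < c := lt_trans h0 hcgt
  have h2 : (2 / Real.sqrt 3) ^ 2 = 4 / 3 := by
    rw [div_pow, hs3sq]; norm_num
  have hcsq : c ^ 2 > 4 / 3 := by
    nlinarith [mul_pos (sub_pos.mpr hcgt) (add_pos hcpos h0), h2]
  have hc1 : c > 1 := by
    have hslt : Real.sqrt 3 < 2 := by nlinarith [hs3sq, hs3]
    have : (1:ℝ) < 2 / Real.sqrt 3 := (one_lt_div hs3).mpr hslt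
    linarith
  -- cubic identity for c
  have hcube : c ^ 3 - 4 * c + 8 / 3 = 0 := by
    have hk : 4 * Real.cos (5 * Real.pi / 18) ^ 3 - 3 * Real.cos (5 * Real.pi / 18)
        = -(Real.sqrt 3 / 2) := by
      have h3 : Real.cos (3 * (5 * Real.pi / 18)) =
          4 * Real.cos (5 * Real.pi / 18) ^ 3 - 3 * Real.cos (5 * Real.pi / 18) :=
        Real.cos_three_mul _
      have h4 : (3:ℝ) * (5 * Real.pi / 18) = Real.pi - Real.pi / 6 := by ring
      rw [h4, Real.cos_pi_sub, Real.cos_pi_div_six] at h3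
      linarith
    have hcs : c * Real.sqrt 3 = 4 * Real.cos (5 * Real.pi / 18) := by
      rw [hc]
      field_simp
    have key : Real.sqrt 3 * (c ^ 3 - 4 * c + 8 / 3) = 0 := by
      linear_combination (((c * Real.sqrt 3) ^ 2 + 4 * Real.cos (5 * Real.pi / 18) *
          (c * Real.sqrt 3) + 16 * Real.cos (5 * Real.pi / 18) ^ 2 - 12) / 3) * hcs
        - (c ^ 3 * Real.sqrt 3 / 3) * hs3sq + (16 / 3) * hk
    rcases mul_eq_zero.mp key with h' | h'
    · exact absurd h' (ne_of_gt hs3)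
    · exact h'
  have hccc : c ^ 2 + c > 3 := by
    nlinarith [hcube, hcsq, hc1, sq_nonneg (c - 3/2), sq_nonneg (c + 2), sq_nonneg (c - 1)]
  constructor
  · intro h
    by_cases hlt : y < α
    · exfalso
      rw [Psi, Psi', if_pos hlt, if_pos hlt] at h
      nlinarith [pow_pos hy 3]
    · push_neg at hlt
      rw [Psi, Psi', if_neg (not_lt.mpr hlt), if_neg (not_lt.mpr hlt)] at h
      have hcubic : y ^ 3 - 4 * α ^ 2 * y + 8 / 3 * α ^ 3 = 0 := by linarith [h]; 
      have hfac : (y - c * α) * (y ^ 2 + c * α * y + (c ^ 2 - 4) * α ^ 2) = 0 := by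
        linear_combination hcubic - α ^ 3 * hcube
      have hq : y ^ 2 + c * α * y + (c ^ 2 - 4) * α ^ 2 > 0 := by
        nlinarith [hccc, hα, hc1, hlt, mul_pos hα hα, mul_nonneg (sub_nonneg.mpr hlt) hα.le]
      rcases mul_eq_zero.mp hfac with h1 | h2
      · linarith [sub_eq_zero.mp h1]
      · linarith
  · intro h
    subst h
    have hyα : ¬ c * α < α :=
      not_lt.mpr (le_mul_of_one_le_left hα.le hc1.le)
    rw [Psi, Psi', if_neg hyα, if_neg hyα]
    linear_combination (-α ^ 3) * hcube
end

section
/- For any nonnegative measurable function f on ℝ with ∫ Ψ(f) dx = 1, where Ψ(f) = αf² - f³/3 for 0 ≤ f < α and Ψ(f) = (2/3)α³ + α²(f-α) + (f-α)³ for f ≥ α, there exist constants c, C > 0 independent of α and f such that c ≤ ∫ (α f² + f³) dx ≤ C. -/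
open MeasureTheory

lemma psi_le (α y : ℝ) (hα : 0 < α) (hy : 0 ≤ y) :
    Psi α y ≤ α * y ^ 2 + y ^ 3 := by
  unfold Psi
  split_ifs with h
  · nlinarith [pow_nonneg hy 3]
  · push_neg at h
    nlinarith [pow_nonneg hα.le 3, mul_nonneg (mul_nonneg hα.le hα.le) (sub_nonneg.2 h),
      mul_nonneg hα.le (mul_nonneg (sub_nonneg.2 h) (sub_nonneg.2 h))]

lemma le_psi (α y : ℝ) (hα : 0 < α) (hy : 0 ≤ y) :
    α * y ^ 2 + y ^ 3 ≤ 5 * Psi α y := by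
  unfold Psi
  split_ifs with h
  · nlinarith [mul_nonneg (sub_nonneg.2 h.le) (mul_nonneg hy hy), mul_nonneg hy hy]
  · push_neg at h
    have h0 : 0 ≤ y - α := sub_nonneg.2 h
    have amgm : α * (y - α) ^ 2 ≤ (α ^ 3 + 2 * (y - α) ^ 3) / 3 := by
      nlinarith [mul_nonneg (by linarith : (0:ℝ) ≤ α + 2 * (y - α)) (sq_nonneg (α - (y - α)))]
    nlinarith [mul_nonneg (mul_nonneg hα.le hα.le) h0, pow_nonneg hα.le 3, pow_nonneg h0 3]

theorem stmt4 :
    ∃ c C : ℝ, 0 < c ∧ 0 < C ∧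
      ∀ (α : ℝ), 0 < α → ∀ f : ℝ → ℝ, Measurable f → (∀ x, 0 ≤ f x) →
        (∫⁻ x : ℝ, ENNReal.ofReal (Psi α (f x)) = 1) →
        ENNReal.ofReal c ≤ (∫⁻ x : ℝ, ENNReal.ofReal (α * (f x) ^ 2 + (f x) ^ 3)) ∧
        (∫⁻ x : ℝ, ENNReal.ofReal (α * (f x) ^ 2 + (f x) ^ 3)) ≤ ENNReal.ofReal C := by
  refine ⟨1, 5, one_pos, by norm_num, ?_⟩
  intro α hα f hf hf0 hint
  constructor
  · calc ENNReal.ofReal 1 = 1 := by simp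
    _ = ∫⁻ x : ℝ, ENNReal.ofReal (Psi α (f x)) := hint.symm
    _ ≤ ∫⁻ x : ℝ, ENNReal.ofReal (α * (f x) ^ 2 + (f x) ^ 3) := by
        exact lintegral_mono fun x => ENNReal.ofReal_le_ofReal (psi_le α (f x) hα (hf0 x))
  · calc (∫⁻ x : ℝ, ENNReal.ofReal (α * (f x) ^ 2 + (f x) ^ 3))
        ≤ ∫⁻ x : ℝ, ENNReal.ofReal (5 * Psi α (f x)) := by
          exact lintegral_mono fun x => ENNReal.ofReal_le_ofReal (le_psi α (f x) hα (hf0 x))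
    _ = ∫⁻ x : ℝ, ENNReal.ofReal 5 * ENNReal.ofReal (Psi α (f x)) := by
        congr 1; funext x; rw [ENNReal.ofReal_mul (by norm_num)]
    _ = ENNReal.ofReal 5 * ∫⁻ x : ℝ, ENNReal.ofReal (Psi α (f x)) := by
        rw [lintegral_const_mul' _ _ ENNReal.ofReal_ne_top]
    _ = ENNReal.ofReal 5 := by rw [hint, mul_one]
end

section
/- Let K ∈ L¹(ℝ) be even, positive, and strictly decreasing on (0,∞) (bell-shaped), and let f ∈ L^p(ℝ), 1 ≤ p ≤ ∞, be bell-shaped (even, nonnegative, nonincreasing on [0,∞)). Then the convolution K * f is even, nonnegative, and nonincreasing on [0,∞); moreover if f is not a.e. constant, then K*f attains its maximum only at the origin. -/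
/-!
Write `x₁ = c - d ≤ x₂ = c + d` with `c, d ≥ 0`. Substituting `y = c + u` and symmetrising
`u ↦ -u` (using that `K` is even) gives
`2 ((K * f)(x₁) - (K * f)(x₂)) = ∫ (K(d + u) - K(d - u)) (f(c + u) - f(c - u)) du`.
For `u ≥ 0` we have `|d - u| ≤ d + u` and `|c - u| ≤ c + u`, so both factors are `≤ 0`; the
integrand is even in `u`, hence nonnegative, and `K * f` is nonincreasing on `[0, ∞)`.

If `(K * f)(x) = (K * f)(0)` for some `x > 0`, take `c = d = x / 2`: the integrand vanishes a.e.
Strict monotonicity of `K` makes the first factor nonzero off `{0, ±d}`, so `f(c + u) = f(c - u)`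
for a.e. `u`. Reflecting through `c` then propagates the value `f c` from `(0, c]` to
`(0, 2c]`, `(0, 3c]`, …, so `f` is constant off the origin.
-/

open MeasureTheory ENNReal
open Set Filter

lemma exists_mem_Ioo_of_ae {P : ℝ → Prop} (h : ∀ᵐ u, P u) {α β : ℝ} (hαβ : α < β) :
    ∃ u ∈ Ioo α β, P u := by
  have : NeBot (ae (volume.restrict (Ioo α β))) := ae_neBot.2 (by simp [hαβ])
  exact ((ae_restrict_mem measurableSet_Ioo).and (ae_restrict_of_ae h)).exists

namespace Function.Even

variable {g : ℝ → ℝ}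

lemma apply_abs (hg : g.Even) (x : ℝ) : g |x| = g x := by
  rcases abs_choice x with h | h <;> rw [h]
  exact hg x

lemma apply_le_apply_of_abs_le {s : Set ℝ} (hg : g.Even) (hmono : AntitoneOn g s) {a b : ℝ}
    (ha : |a| ∈ s) (hb : |b| ∈ s) (hab : |a| ≤ |b|) : g b ≤ g a := by
  simpa only [hg.apply_abs] using hmono ha hb hab

lemma apply_add_le_apply_sub {s : Set ℝ} (hg : g.Even) (hmono : AntitoneOn g s) {a u : ℝ}
    (ha : 0 ≤ a) (hu : 0 ≤ u) (hadd : |a + u| ∈ s) (hsub : |a - u| ∈ s) :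
    g (a + u) ≤ g (a - u) :=
  hg.apply_le_apply_of_abs_le hmono hsub hadd <| by
    rw [abs_of_nonneg (add_nonneg ha hu)]
    exact abs_sub_le_iff.2 ⟨by linarith, by linarith⟩

lemma measurable_of_antitoneOn (hg : g.Even) (hmono : AntitoneOn g (Ici 0)) : Measurable g := by
  have hanti : Antitone fun t => g (max t 0) := fun a b hab =>
    hmono (le_max_right a 0) (le_max_right b 0) (max_le_max_right 0 hab)
  have hcomp : g = (fun t => g (max t 0)) ∘ abs :=
    funext fun x => by simp only [comp_apply, max_eq_left (abs_nonneg x), hg.apply_abs]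
  rw [hcomp]
  exact hanti.measurable.comp measurable_abs

lemma apply_eq_of_ae_reflect (hg : g.Even) (hmono : AntitoneOn g (Ici 0)) {c : ℝ} (hc : 0 < c)
    (hrefl : ∀ᵐ u, g (c + u) = g (c - u)) {t : ℝ} (ht : 0 < t) : g t = g c := by
  have key : ∀ n : ℕ, ∀ t, 0 < t → t ≤ (n + 1) * c → g t = g c := by
    intro n
    induction n with
    | zero =>
      intro t ht htc
      rw [Nat.cast_zero, zero_add, one_mul] at htc
      obtain ⟨u, ⟨hu₁, hu₂⟩, hu⟩ := exists_mem_Ioo_of_ae hrefl (show c - t < c by linarith)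
      refine le_antisymm ?_ (hmono ht.le hc.le htc)
      calc g t ≤ g (c - u) := hmono (by simp only [mem_Ici]; linarith) ht.le (by linarith)
        _ = g (c + u) := hu.symm
        _ ≤ g c := hmono hc.le (by simp only [mem_Ici]; linarith) (by linarith)
    | succ n ih =>
      intro t ht htc
      push_cast at htc
      by_cases hle : t ≤ (n + 1) * c
      · exact ih t ht hle
      have hnc : 0 ≤ (n : ℝ) * c := by positivity
      obtain ⟨u, ⟨hu₁, hu₂⟩, huc, hu⟩ :=
        exists_mem_Ioo_of_ae ((volume.ae_ne c).and hrefl) (show t - c < t by linarith)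
      refine le_antisymm (hmono hc.le ht.le (by linarith)) ?_
      calc g c = g |c - u| :=
            (ih _ (abs_pos.2 (sub_ne_zero.2 (Ne.symm huc)))
              (abs_sub_le_iff.2 ⟨by linarith, by linarith⟩)).symm
        _ = g (c + u) := by rw [hg.apply_abs, hu]
        _ ≤ g t := hmono ht.le (by simp only [mem_Ici]; linarith) (by linarith)
  obtain ⟨n, hn⟩ := exists_nat_ge (t / c)
  exact key n t ht <| by
    rw [div_le_iff₀ hc] at hn
    nlinarith

end Function.Even

section Symmetrization

variable {K f : ℝ → ℝ}

lemma integral_neg_sub_mul (hK : K.Even) (hf : f.Even) (x : ℝ) :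
    ∫ y, K (-x - y) * f y = ∫ y, K (x - y) * f y := by
  rw [← integral_neg_eq_self]
  congr 1 with y
  rw [show -x - -y = -(x - y) by ring, hK, hf]

def symmetrizedIntegrand (K f : ℝ → ℝ) (c d u : ℝ) : ℝ :=
  (K (d + u) - K (d - u)) * (f (c + u) - f (c - u))

lemma symmetrizedIntegrand_neg (c d u : ℝ) :
    symmetrizedIntegrand K f c d (-u) = symmetrizedIntegrand K f c d u := by
  simp only [symmetrizedIntegrand, ← sub_eq_add_neg, sub_neg_eq_add]
  ring

lemma integrable_symmetrizedIntegrand_and_integral_eq (hK : K.Even)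
    (hint : ∀ x, Integrable fun y => K (x - y) * f y) (c d : ℝ) :
    Integrable (symmetrizedIntegrand K f c d) ∧
      ((∫ y, K (c - d - y) * f y) - ∫ y, K (c + d - y) * f y) * 2 =
        ∫ u, symmetrizedIntegrand K f c d u := by
  set g : ℝ → ℝ := fun u => (K (d + u) - K (d - u)) * f (c + u)
  have hshift : (fun u => (K (c - d - (u + c)) - K (c + d - (u + c))) * f (u + c)) = g := by
    funext u
    rw [show c - d - (u + c) = -(d + u) by ring, show c + d - (u + c) = d - u by ring, hK,
      add_comm u c]
  have hdiff : Integrable fun y => (K (c - d - y) - K (c + d - y)) * f y := by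
    simpa only [Pi.sub_def, sub_mul] using (hint (c - d)).sub (hint (c + d))
  have hg : Integrable g := hshift ▸ hdiff.comp_add_right c
  have hsymm : symmetrizedIntegrand K f c d = fun u => g u + g (-u) := by
    funext u
    simp only [g, symmetrizedIntegrand, ← sub_eq_add_neg, sub_neg_eq_add]
    ring
  refine ⟨hsymm ▸ hg.add hg.comp_neg, ?_⟩
  calc ((∫ y, K (c - d - y) * f y) - ∫ y, K (c + d - y) * f y) * 2
      = (∫ y, (K (c - d - y) - K (c + d - y)) * f y) * 2 := by
        rw [← integral_sub (hint _) (hint _)]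
        simp only [sub_mul]
    _ = (∫ u, g u) * 2 := by
        rw [← integral_add_right_eq_self _ c, hshift]
    _ = ∫ u, g u + g (-u) := by
        rw [integral_add hg hg.comp_neg, integral_neg_eq_self]
        ring
    _ = ∫ u, symmetrizedIntegrand K f c d u := by rw [hsymm]

lemma apply_add_eq_apply_sub_of_symmetrizedIntegrand_eq_zero (hKeven : K.Even)
    (hKdec : StrictAntiOn K (Ioi 0)) {c d u : ℝ} (hd : 0 < d) (hu : u ≠ 0) (hud : u ≠ d)
    (hund : u ≠ -d)
    (h : symmetrizedIntegrand K f c d u = 0) : f (c + u) = f (c - u) := by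
  have hK : K (d + u) ≠ K (d - u) := by
    rw [← hKeven.apply_abs, ← hKeven.apply_abs (d - u)]
    intro heq
    have habs := hKdec.injOn (abs_pos.2 fun h : d + u = 0 => hund (by linarith))
      (abs_pos.2 fun h : d - u = 0 => hud (by linarith)) heq
    have : d * u = 0 := by nlinarith [sq_eq_sq_iff_abs_eq_abs (d + u) (d - u) |>.2 habs]
    exact hu ((mul_eq_zero.1 this).resolve_left hd.ne')
  exact sub_eq_zero.1 ((mul_eq_zero.1 h).resolve_left (sub_ne_zero.2 hK))

variable (hKeven : K.Even) (hfeven : f.Even) (hfmono : AntitoneOn f (Ici 0))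
include hKeven hfeven hfmono

lemma symmetrizedIntegrand_ae_nonneg (hKmono : AntitoneOn K (Ioi 0)) {c d : ℝ} (hc : 0 ≤ c)
    (hd : 0 ≤ d) : 0 ≤ᵐ[volume] symmetrizedIntegrand K f c d := by
  filter_upwards [volume.ae_ne d, volume.ae_ne (-d)] with u hud hund
  wlog hu : 0 ≤ u generalizing u
  · rw [← symmetrizedIntegrand_neg]
    exact this (-u) (fun h => hund (by linarith)) (fun h => hud (by linarith)) (by linarith)
  have hadd : d + u ≠ 0 := fun h => hud (by linarith)
  have hsub : d - u ≠ 0 := fun h => hud (by linarith)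
  exact mul_nonneg_of_nonpos_of_nonpos
    (sub_nonpos.2 (hKeven.apply_add_le_apply_sub hKmono hd hu (abs_pos.2 hadd) (abs_pos.2 hsub)))
    (sub_nonpos.2 (hfeven.apply_add_le_apply_sub hfmono hc hu
      (mem_Ici.2 (abs_nonneg _)) (mem_Ici.2 (abs_nonneg _))))

lemma antitoneOn_integral_sub_mul (hKmono : AntitoneOn K (Ioi 0))
    (hint : ∀ x, Integrable fun y => K (x - y) * f y) :
    AntitoneOn (fun x => ∫ y, K (x - y) * f y) (Ici 0) := by
  intro x₁ hx₁ x₂ hx₂ hx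
  obtain ⟨-, hid⟩ :=
    integrable_symmetrizedIntegrand_and_integral_eq hKeven hint ((x₁ + x₂) / 2) ((x₂ - x₁) / 2)
  rw [show (x₁ + x₂) / 2 - (x₂ - x₁) / 2 = x₁ by ring,
    show (x₁ + x₂) / 2 + (x₂ - x₁) / 2 = x₂ by ring] at hid
  have hnonneg := integral_nonneg_of_ae <| symmetrizedIntegrand_ae_nonneg hKeven hfeven hfmono
    hKmono (c := (x₁ + x₂) / 2) (d := (x₂ - x₁) / 2) (by simp only [mem_Ici] at hx₁ hx₂; linarith)
    (by linarith)
  dsimp only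
  linarith

lemma integral_sub_mul_lt_of_not_ae_const (hKdec : StrictAntiOn K (Ioi 0))
    (hint : ∀ x, Integrable fun y => K (x - y) * f y) (hnc : ¬ ∃ a, f =ᵐ[volume] fun _ => a)
    {x : ℝ} (hx : 0 < x) : ∫ y, K (x - y) * f y < ∫ y, K (0 - y) * f y := by
  set c := x / 2
  have hc : 0 < c := half_pos hx
  obtain ⟨hG, hid⟩ := integrable_symmetrizedIntegrand_and_integral_eq hKeven hint c c
  rw [sub_self, show c + c = x by ring] at hid
  have hnonneg := symmetrizedIntegrand_ae_nonneg hKeven hfeven hfmono hKdec.antitoneOn hc.le hc.le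
  have hle := antitoneOn_integral_sub_mul hKeven hfeven hfmono hKdec.antitoneOn hint
    self_mem_Ici hx.le hx.le
  refine lt_of_le_of_ne hle fun heq => hnc ⟨f c, ?_⟩
  have hzero : symmetrizedIntegrand K f c c =ᵐ[volume] 0 :=
    (integral_eq_zero_iff_of_nonneg_ae hnonneg hG).1 (by rw [← hid, heq, sub_self, zero_mul])
  have hrefl : ∀ᵐ u, f (c + u) = f (c - u) := by
    filter_upwards [hzero, volume.ae_ne 0, volume.ae_ne c, volume.ae_ne (-c)] with u h hu hud hund
    exact apply_add_eq_apply_sub_of_symmetrizedIntegrand_eq_zero hKeven hKdec hc hu hud hund h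
  filter_upwards [volume.ae_ne 0] with t ht
  rw [← hfeven.apply_abs]
  exact hfeven.apply_eq_of_ae_reflect hfmono hc hrefl (abs_pos.2 ht)

end Symmetrization

theorem stmt9_general (K f : ℝ → ℝ)
    (hKint : Integrable K) (hKeven : ∀ x, K (-x) = K x) (hKpos : ∀ x, 0 < K x)
    (hKdec : StrictAntiOn K (Set.Ioi 0))
    (hfeven : ∀ x, f (-x) = f x) (hfnn : ∀ x, 0 ≤ f x)
    (hfdec : AntitoneOn f (Set.Ici 0)) :
    (∀ x : ℝ, (∫ y, K (-x - y) * f y) = ∫ y, K (x - y) * f y) ∧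
    (∀ x : ℝ, 0 ≤ ∫ y, K (x - y) * f y) ∧
    AntitoneOn (fun x => ∫ y, K (x - y) * f y) (Set.Ici 0) ∧
    ((¬ ∃ c : ℝ, f =ᵐ[volume] fun _ => c) →
      ∀ x : ℝ, x ≠ 0 → (∫ y, K (x - y) * f y) < ∫ y, K (0 - y) * f y) := by
  have hfbdd : ∀ y, ‖f y‖ ≤ f 0 := fun y => by
    rw [Real.norm_of_nonneg (hfnn y)]
    exact Function.Even.apply_le_apply_of_abs_le hfeven hfdec (by simp) (abs_nonneg y) (by simp)
  have hint : ∀ x, Integrable fun y => K (x - y) * f y := fun x =>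
    (hKint.comp_sub_left x).mul_bdd
      (Function.Even.measurable_of_antitoneOn hfeven hfdec).aestronglyMeasurable
      (ae_of_all _ hfbdd)
  have hstrict := integral_sub_mul_lt_of_not_ae_const hKeven hfeven hfdec hKdec hint
  refine ⟨integral_neg_sub_mul hKeven hfeven, fun x => integral_nonneg fun y =>
    mul_nonneg (hKpos _).le (hfnn _), antitoneOn_integral_sub_mul hKeven hfeven hfdec
    hKdec.antitoneOn hint, fun hnc x hx => ?_⟩
  rcases hx.lt_or_gt with hx | hx
  · rw [← neg_neg x, integral_neg_sub_mul hKeven hfeven]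
    exact hstrict hnc (neg_pos.2 hx)
  · exact hstrict hnc hx

theorem stmt9 (p : ℝ≥0∞) (hp : 1 ≤ p) (K f : ℝ → ℝ)
    (hKint : Integrable K) (hKeven : ∀ x, K (-x) = K x) (hKpos : ∀ x, 0 < K x)
    (hKdec : StrictAntiOn K (Set.Ioi 0))
    (hf : MemLp f p) (hfeven : ∀ x, f (-x) = f x) (hfnn : ∀ x, 0 ≤ f x)
    (hfdec : AntitoneOn f (Set.Ici 0)) :
    (∀ x : ℝ, (∫ y, K (-x - y) * f y) = ∫ y, K (x - y) * f y) ∧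
    (∀ x : ℝ, 0 ≤ ∫ y, K (x - y) * f y) ∧
    AntitoneOn (fun x => ∫ y, K (x - y) * f y) (Set.Ici 0) ∧
    ((¬ ∃ c : ℝ, f =ᵐ[volume] fun _ => c) →
      ∀ x : ℝ, x ≠ 0 → (∫ y, K (x - y) * f y) < ∫ y, K (0 - y) * f y) :=
  stmt9_general K f hKint hKeven hKpos hKdec hfeven hfnn hfdec
end

section
/- Let φ be a bell-shaped (even, nonnegative, strictly decreasing on (0,∞) after convolution) solution of z = μφ - φ² where z = K*φ is strictly decreasing on (0,∞) and 0 ≤ z ≤ μ²/4. Then φ(x) = (μ - √(μ² - 4 z(x)))/2 almost everywhere, and in particular 0 < φ ≤ μ/2. -/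
open MeasureTheory

theorem stmt15 (μ : ℝ) (hμ : 0 < μ) (K φ : ℝ → ℝ)
    (hK : Integrable K) (hKeven : ∀ x, K (-x) = K x) (hKnn : ∀ x, 0 ≤ K x)
    (hKdec : AntitoneOn K (Set.Ici 0))
    (hφeven : ∀ x, φ (-x) = φ x) (hφnn : ∀ x, 0 ≤ φ x)
    (hφdec : AntitoneOn φ (Set.Ici 0))
    (hz : StrictAntiOn (fun x => ∫ y : ℝ, K (x - y) * φ y) (Set.Ioi 0))
    (hzb : ∀ x : ℝ, 0 ≤ (∫ y : ℝ, K (x - y) * φ y) ∧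
      (∫ y : ℝ, K (x - y) * φ y) ≤ μ ^ 2 / 4)
    (heq : ∀ᵐ x : ℝ ∂volume,
      μ * φ x = (∫ y : ℝ, K (x - y) * φ y) + (φ x) ^ 2) :
    (∀ᵐ x : ℝ ∂volume,
      φ x = (μ - Real.sqrt (μ ^ 2 - 4 * ∫ y : ℝ, K (x - y) * φ y)) / 2) ∧
    (∀ᵐ x : ℝ ∂volume, 0 < φ x ∧ φ x ≤ μ / 2) := by
  set z : ℝ → ℝ := fun x => ∫ y : ℝ, K (x - y) * φ y with hzdef
  -- z is even
  have zeven : ∀ x, z (-x) = z x := by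
    intro x
    have h1 : (∫ y : ℝ, K (-x - (-y)) * φ (-y)) = z (-x) :=
      integral_neg_eq_self (fun y => K (-x - y) * φ y) volume
    have h2 : (∫ y : ℝ, K (-x - (-y)) * φ (-y)) = z x := by
      simp only [hzdef]
      congr 1
      funext y
      have : K (-x - -y) = K (x - y) := by
        rw [show (-x - -y) = -(x - y) by ring, hKeven]
      rw [this, hφeven]
    rw [← h1, h2]
  -- z is positive away from 0
  have zpos : ∀ x : ℝ, x ≠ 0 → 0 < z x := by
    have hp : ∀ x : ℝ, 0 < x → 0 < z x := by
      intro x hx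
      rcases lt_or_eq_of_le (hzb x).1 with h | h
      · exact h
      · exfalso
        have h2 : z (x + 1) < z x := hz (Set.mem_Ioi.mpr hx)
          (Set.mem_Ioi.mpr (by linarith)) (by linarith)
        have h3 : (0:ℝ) ≤ z (x + 1) := (hzb (x + 1)).1
        have h4 : z x = 0 := h.symm
        linarith
    intro x hx
    rcases lt_or_gt_of_ne hx with h | h
    · have := hp (-x) (by linarith)
      rwa [zeven] at this
    · exact hp x h
  -- even facts for φ and z at |x|
  have habsφ : ∀ x : ℝ, φ |x| = φ x := by
    intro x
    rcases abs_choice x with h | h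
    · rw [h]
    · rw [h, hφeven]
  have habsz : ∀ x : ℝ, z |x| = z x := by
    intro x
    rcases abs_choice x with h | h
    · rw [h]
    · rw [h, zeven]
  -- main pointwise claim
  have key : ∀ x : ℝ, x ≠ 0 → μ * φ x = z x + (φ x) ^ 2 →
      (φ x = (μ - Real.sqrt (μ ^ 2 - 4 * z x)) / 2 ∧ 0 < φ x ∧ φ x ≤ μ / 2) := by
    intro x hxne hx
    have ha : 0 < |x| := abs_pos.mpr hxne
    have hle : φ x ≤ μ / 2 := by
      by_contra hgt
      push_neg at hgt
      -- find a point y ∈ Ioo 0 |x| where the equation holds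
      obtain ⟨y, hy, hyeq⟩ : ∃ y ∈ Set.Ioo (0 : ℝ) |x|, μ * φ y = z y + (φ y) ^ 2 := by
        by_contra hno
        push_neg at hno
        have hsub : Set.Ioo (0 : ℝ) |x| ⊆ {w | ¬ (μ * φ w = z w + (φ w) ^ 2)} := by
          intro w hw
          exact hno w hw
        have h0 : volume {w : ℝ | ¬ (μ * φ w = z w + (φ w) ^ 2)} = 0 := by
          exact heq
        have : volume (Set.Ioo (0 : ℝ) |x|) = 0 :=
          measure_mono_null hsub h0
        rw [Real.volume_Ioo] at this
        simp only [ENNReal.ofReal_eq_zero] at this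
        linarith
      have hφy : φ x ≤ φ y := by
        rw [← habsφ x]
        exact hφdec (Set.mem_Ici.mpr (le_of_lt hy.1)) (Set.mem_Ici.mpr (le_of_lt ha))
          (le_of_lt hy.2)
      have hzy : z x < z y := by
        rw [← habsz x]
        exact hz (Set.mem_Ioi.mpr hy.1) (Set.mem_Ioi.mpr ha) hy.2
      nlinarith [hφy, hgt, hzy, hx, hyeq]
    have hsq : μ ^ 2 - 4 * z x = (μ - 2 * φ x) ^ 2 := by nlinarith [hx]
    have hsqrt : Real.sqrt (μ ^ 2 - 4 * z x) = μ - 2 * φ x := by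
      rw [hsq, Real.sqrt_sq (by linarith)]
    have hform : φ x = (μ - Real.sqrt (μ ^ 2 - 4 * z x)) / 2 := by
      rw [hsqrt]; ring
    have hpos : 0 < φ x := by
      have hzx := zpos x hxne
      nlinarith [hsqrt, Real.sqrt_nonneg (μ ^ 2 - 4 * z x), hzx]
    exact ⟨hform, hpos, hle⟩
  have hne : ∀ᵐ x : ℝ ∂volume, x ≠ 0 := by
    rw [ae_iff]
    simp only [not_ne_iff]
    have : {x : ℝ | x = 0} = {0} := by ext w; simp
    rw [this, Real.volume_singleton]
  have main : ∀ᵐ x : ℝ ∂volume,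
      (φ x = (μ - Real.sqrt (μ ^ 2 - 4 * z x)) / 2 ∧ 0 < φ x ∧ φ x ≤ μ / 2) := by
    filter_upwards [heq, hne] with x hx hxne
    exact key x hxne hx
  constructor
  · filter_upwards [main] with x hx using hx.1
  · filter_upwards [main] with x hx using ⟨hx.2.1, hx.2.2⟩
end

section
/- Let h(y) = y²/Ψ(y) for y > 0, where Ψ(y)=αy²-y³/3 on (0,α) and Ψ(y)=(2/3)α³+α²(y-α)+(y-α)³ on [α,∞). Then h'(y) = y(2Ψ(y)-yΨ'(y))/Ψ(y)², and h attains its unique maximum on (0,∞) at B = (4/√3)cos(5π/18)·α, with (B - y)·h'(y) > 0 for all y > 0, y ≠ B. -/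
open Real Set

theorem hasDerivAt_ite_lt {f g f' g' : ℝ → ℝ} {a : ℝ} (hf : ∀ x, HasDerivAt f (f' x) x)
    (hg : ∀ x, HasDerivAt g (g' x) x) (hfg : f a = g a) (hfg' : f' a = g' a) (x : ℝ) :
    HasDerivAt (fun y => if y < a then f y else g y) (if x < a then f' x else g' x) x := by
  rcases lt_trichotomy x a with hxa | rfl | hax
  · rw [if_pos hxa]
    refine (hf x).congr_of_eventuallyEq ?_
    filter_upwards [Iio_mem_nhds hxa] with y hy
    exact if_pos hy
  · have hleft : HasDerivWithinAt (fun y => if y < x then f y else g y) (g' x) (Iic x) x := by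
      rw [← hfg']
      refine (hf x).hasDerivWithinAt.congr (fun y hy => ?_) (by rw [if_neg (lt_irrefl x), hfg])
      rcases (mem_Iic.1 hy).lt_or_eq with hyx | hyx
      · exact if_pos hyx
      · rw [if_neg hyx.not_lt, hyx, hfg]
    have hright : HasDerivWithinAt (fun y => if y < x then f y else g y) (g' x) (Ici x) x :=
      (hg x).hasDerivWithinAt.congr (fun y hy => if_neg (not_lt.2 hy)) (if_neg (lt_irrefl x))
    rw [if_neg (lt_irrefl x), ← hasDerivWithinAt_univ, ← Iic_union_Ici]
    exact hleft.union hright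
  · rw [if_neg (not_lt.2 hax.le)]
    refine (hg x).congr_of_eventuallyEq ?_
    filter_upwards [Ioi_mem_nhds hax] with y hy
    exact if_neg (not_lt.2 (le_of_lt hy))

theorem hasDerivAt_Psi (α x : ℝ) : HasDerivAt (Psi α) (Psi' α x) x := by
  have hlow : ∀ x : ℝ, HasDerivAt (fun y => α * y ^ 2 - y ^ 3 / 3) (2 * α * x - x ^ 2) x :=
    fun x => (((hasDerivAt_pow 2 x).const_mul α).sub
      ((hasDerivAt_pow 3 x).div_const 3)).congr_deriv (by push_cast; ring)
  have hhigh : ∀ x : ℝ,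
      HasDerivAt (fun y => (2 / 3) * α ^ 3 + α ^ 2 * (y - α) + (y - α) ^ 3)
        (α ^ 2 + 3 * (x - α) ^ 2) x := by
    intro x
    have hlin : HasDerivAt (fun y : ℝ => y - α) 1 x := (hasDerivAt_id x).sub_const α
    exact (((hlin.const_mul (α ^ 2)).const_add ((2 / 3) * α ^ 3)).add (hlin.pow 3)).congr_deriv
      (by push_cast; ring)
  exact hasDerivAt_ite_lt hlow hhigh (by ring) (by ring) x

theorem Psi_pos {α y : ℝ} (hα : 0 < α) (hy : 0 < y) : 0 < Psi α y := by
  unfold Psi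
  split_ifs with hyα
  · nlinarith [mul_pos (mul_pos hy hy) (show 0 < α - y / 3 by linarith)]
  · nlinarith [pow_nonneg (sub_nonneg.2 (not_lt.1 hyα)) 3, pow_pos hα 3]

theorem hasDerivAt_sq_div_Psi {α x : ℝ} (hΨ : Psi α x ≠ 0) :
    HasDerivAt (fun y => y ^ 2 / Psi α y)
      (x * (2 * Psi α x - x * Psi' α x) / Psi α x ^ 2) x :=
  ((hasDerivAt_pow 2 x).div (hasDerivAt_Psi α x) hΨ).congr_deriv (by push_cast; ring)

theorem two_mul_Psi_sub_of_lt {α y : ℝ} (hyα : y < α) :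
    2 * Psi α y - y * Psi' α y = y ^ 3 / 3 := by
  simp only [Psi, Psi', if_pos hyα]
  ring

theorem two_mul_Psi_sub_of_le {α y : ℝ} (hαy : α ≤ y) :
    2 * Psi α y - y * Psi' α y = -(y ^ 3 - 4 * α ^ 2 * y + 8 / 3 * α ^ 3) := by
  simp only [Psi, Psi', if_neg (not_lt.2 hαy)]
  ring

theorem sub_mul_two_mul_Psi_sub_pos {α B y : ℝ} (hα : 0 < α) (hαB : α < B)
    (hB : B ^ 3 - 4 * α ^ 2 * B + 8 / 3 * α ^ 3 = 0) (hy : 0 < y) (hyB : y ≠ B) :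
    0 < (B - y) * (2 * Psi α y - y * Psi' α y) := by
  rcases lt_or_ge y α with hyα | hαy
  · rw [two_mul_Psi_sub_of_lt hyα]
    exact mul_pos (by linarith) (by positivity)
  · have hquad : 0 < B ^ 2 + α * B - 3 * α ^ 2 := by
      have hfactor : (B ^ 2 + α * B - 3 * α ^ 2) * (B - α) = α ^ 3 / 3 := by
        linear_combination hB
      exact pos_of_mul_pos_left (hfactor ▸ by positivity) (sub_pos.2 hαB).le
    have hQ : 0 < y ^ 2 + y * B + B ^ 2 - 4 * α ^ 2 := by nlinarith
    have hsq : 0 < (B - y) ^ 2 := sq_pos_of_ne_zero (sub_ne_zero.2 hyB.symm)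
    rw [two_mul_Psi_sub_of_le hαy]
    calc 0 < (B - y) ^ 2 * (y ^ 2 + y * B + B ^ 2 - 4 * α ^ 2) := mul_pos hsq hQ
      _ = (B - y) * -(y ^ 3 - 4 * α ^ 2 * y + 8 / 3 * α ^ 3) := by linear_combination (B - y) * hB

theorem cos_five_pi_div_eighteen_cubic :
    4 * cos (5 * π / 18) ^ 3 - 3 * cos (5 * π / 18) = -(√3 / 2) := by
  rw [← cos_three_mul, show 3 * (5 * π / 18) = π - π / 6 by ring, cos_pi_sub, cos_pi_div_six]

theorem cubic_root_four_div_sqrt_three_mul_cos :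
    (4 / √3 * cos (5 * π / 18)) ^ 3 - 4 * (4 / √3 * cos (5 * π / 18)) + 8 / 3 = 0 := by
  have hs : √3 ^ 2 = 3 := sq_sqrt (by norm_num)
  have hs0 : √3 ≠ 0 := by positivity
  field_simp
  linear_combination 48 * cos_five_pi_div_eighteen_cubic + (8 * √3 - 48 * cos (5 * π / 18)) * hs

theorem one_lt_four_div_sqrt_three_mul_cos : 1 < 4 / √3 * cos (5 * π / 18) := by
  have hcos : 1 / 2 < cos (5 * π / 18) := by
    rw [← cos_pi_div_three]
    have := pi_pos
    exact cos_lt_cos_of_nonneg_of_le_pi (by positivity) (by linarith) (by linarith)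
  have hs : √3 < 2 := by
    rw [sqrt_lt' two_pos]
    norm_num
  rw [div_mul_eq_mul_div, one_lt_div (by positivity)]
  linarith

theorem lt_apply_of_sub_mul_deriv_pos {D : Set ℝ} (hD : D.OrdConnected) {f f' : ℝ → ℝ}
    {b : ℝ} (hb : b ∈ D) (hf : ∀ x ∈ D, HasDerivAt f (f' x) x)
    (hsign : ∀ x ∈ D, x ≠ b → 0 < (b - x) * f' x) {y : ℝ} (hy : y ∈ D) (hyb : y ≠ b) :
    f y < f b := by
  have hmvt : ∀ {u v}, u ∈ D → v ∈ D → u < v →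
      ∃ c ∈ D, u < c ∧ c < v ∧ f v - f u = f' c * (v - u) := by
    intro u v hu hv huv
    have hsub : Icc u v ⊆ D := hD.out hu hv
    obtain ⟨c, ⟨huc, hcv⟩, hc⟩ := exists_hasDerivAt_eq_slope f f' huv
      (fun x hx => (hf x (hsub hx)).continuousAt.continuousWithinAt)
      (fun x hx => hf x (hsub (Ioo_subset_Icc_self hx)))
    exact ⟨c, hsub ⟨huc.le, hcv.le⟩, huc, hcv, by rw [hc]; field_simp [(sub_pos.2 huv).ne']⟩
  rcases hyb.lt_or_gt with hlt | hgt
  · obtain ⟨c, hc, -, hcb, hslope⟩ := hmvt hy hb hlt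
    have hpos : 0 < f' c := pos_of_mul_pos_right (hsign c hc hcb.ne) (sub_pos.2 hcb).le
    linarith [mul_pos hpos (sub_pos.2 hlt)]
  · obtain ⟨c, hc, hbc, -, hslope⟩ := hmvt hb hy hgt
    have hneg : f' c < 0 := neg_of_mul_pos_right (hsign c hc hbc.ne') (sub_neg.2 hbc).le
    linarith [mul_neg_of_neg_of_pos hneg (sub_pos.2 hgt)]

theorem stmt18 (α : ℝ) (hα : 0 < α) :
    let B : ℝ := (4 / Real.sqrt 3) * Real.cos (5 * Real.pi / 18) * α
    let h : ℝ → ℝ := fun y => y ^ 2 / Psi α y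
    (∀ y : ℝ, 0 < y →
      HasDerivAt h (y * (2 * Psi α y - y * Psi' α y) / (Psi α y) ^ 2) y) ∧
    (∀ y : ℝ, 0 < y → y ≠ B → h y < h B) ∧
    (∀ y : ℝ, 0 < y → y ≠ B →
      0 < (B - y) * (y * (2 * Psi α y - y * Psi' α y) / (Psi α y) ^ 2)) := by
  intro B h
  have hαB : α < B := lt_mul_left hα one_lt_four_div_sqrt_three_mul_cos
  have hroot : B ^ 3 - 4 * α ^ 2 * B + 8 / 3 * α ^ 3 = 0 := by
    linear_combination α ^ 3 * cubic_root_four_div_sqrt_three_mul_cos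
  have hderiv : ∀ y : ℝ, 0 < y →
      HasDerivAt h (y * (2 * Psi α y - y * Psi' α y) / (Psi α y) ^ 2) y :=
    fun y hy => hasDerivAt_sq_div_Psi (Psi_pos hα hy).ne'
  have hsign : ∀ y : ℝ, 0 < y → y ≠ B →
      0 < (B - y) * (y * (2 * Psi α y - y * Psi' α y) / (Psi α y) ^ 2) := by
    intro y hy hyB
    rw [mul_div_assoc', mul_left_comm]
    exact div_pos (mul_pos hy (sub_mul_two_mul_Psi_sub_pos hα hαB hroot hy hyB))
      (pow_pos (Psi_pos hα hy) 2)
  exact ⟨hderiv, fun y hy hyB => lt_apply_of_sub_mul_deriv_pos ordConnected_Ioi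
    (hα.trans hαB) hderiv hsign hy hyB, hsign⟩
end
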